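/- Let A be an endomorphism of an n-dimensional vector space and T_r = Σ_{j=0}^r (−1)^j S_j A^{r−j} its Newton transformations, where det(I + tA) = Σ_r S_r t^r. If A(t) is a smooth family with A(0) = A and S_r(t) the corresponding symmetric functions, then (d/dt) S_r(t)|_{t=0} = tr( (d/dt)A(t)|_{t=0} · T_{r−1} ). -/

import Mathlib

open MvPolynomial Matrix

/-- The generalized symmetric function `σ_u(A)`: the coefficient of `t^u` in
`det(I + t₁A₁ + ⋯ + t_qA_q)`. -/
noncomputable def gsigma {n q : ℕ} (A : Fin q → Matrix (Fin n) (Fin n) ℝ)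
    (u : Fin q → ℕ) : ℝ :=
  MvPolynomial.coeff (Finsupp.equivFunOnFinite.symm u)
    ((1 + ∑ α, (MvPolynomial.X α : MvPolynomial (Fin q) ℝ) • (A α).map MvPolynomial.C).det)

/-- Auxiliary recursion (on `|u|`) for the generalized Newton transformation. -/
noncomputable def newtonAux {n q : ℕ} (A : Fin q → Matrix (Fin n) (Fin n) ℝ) :
    ℕ → (Fin q → ℕ) → Matrix (Fin n) (Fin n) ℝ
  | 0, _ => 1
  | k + 1, u =>
      gsigma A u • (1 : Matrix (Fin n) (Fin n) ℝ) -
        ∑ α, if 1 ≤ u α then A α * newtonAux A k (Function.update u α (u α - 1)) else 0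

/-- The generalized Newton transformation `T_u`, defined by `T_0 = I` and
`T_u = σ_u I - ∑_α A_α T_{α♭(u)}`. -/
noncomputable def newton {n q : ℕ} (A : Fin q → Matrix (Fin n) (Fin n) ℝ)
    (u : Fin q → ℕ) : Matrix (Fin n) (Fin n) ℝ :=
  newtonAux A (∑ i, u i) u

/-! Write `S_r(M) = elemSymm r M` for the coefficient of `t^r` in `det (1 + t M)`. The recursion
defining `T_k` is the coefficientwise form of `(1 + t A) * adj (1 + t A) = det (1 + t A)`, so
`adj (1 + t A) = ∑ₖ tᵏ T_k`. Jacobi's formula `d/ds det (P + s Q) |₀ = tr (adj P * Q)`, applied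
over `ℝ[t]` to `P = 1 + t A` and `Q = t H`, then gives `d/ds S_r(A + s H) |₀ = tr (H * T_{r-1})`.
Finally `S_r` is a polynomial in the matrix entries, hence differentiable, so its derivative along
the curve `A(t)` only depends on the tangent vector `H = A'(0)`. -/

open Polynomial

section

variable {R : Type*} [CommRing R] {m : Type*} [Fintype m] [DecidableEq m]

noncomputable def elemSymm (r : ℕ) (M : Matrix m m R) : R :=
  (det (1 + (Polynomial.X : R[X]) • M.map Polynomial.C)).coeff r

theorem elemSymm_zero (M : Matrix m m R) : elemSymm 0 M = 1 := by
  rw [elemSymm, coeff_zero_eq_eval_zero, eval_det_add_X_smul, det_one, Polynomial.eval_one]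

theorem Matrix.derivative_det (M : Matrix m m R[X]) :
    derivative (det M) = ∑ i, det (M.updateCol i fun j => derivative (M j i)) := by
  simp only [det_apply', derivative_sum, derivative_intCast_mul, derivative_prod_finset]
  rw [Finset.sum_comm]
  refine Finset.sum_congr rfl fun σ _ => ?_
  rw [Finset.mul_sum]
  refine Finset.sum_congr rfl fun i _ => ?_
  have hupd : (fun j => M.updateCol i (fun j => derivative (M j i)) (σ j) j) =
      Function.update (fun j => M (σ j) j) i (derivative (M (σ i) i)) := by
    ext j
    by_cases h : j = i
    · subst h; simp
    · simp [h]
  rw [hupd, Finset.prod_update_of_mem (Finset.mem_univ i), Finset.sdiff_singleton_eq_erase,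
    mul_comm (derivative _)]

theorem Matrix.coeff_one_det_add_X_smul (P Q : Matrix m m R) :
    (det (P.map Polynomial.C + (Polynomial.X : R[X]) • Q.map Polynomial.C)).coeff 1 =
      trace (adjugate P * Q) := by
  have hcol (i : m) : (evalRingHom 0).mapMatrix
      ((P.map Polynomial.C + (Polynomial.X : R[X]) • Q.map Polynomial.C).updateCol i fun j =>
        derivative ((P.map Polynomial.C + (Polynomial.X : R[X]) • Q.map Polynomial.C) j i)) =
      P.updateCol i fun j => Q j i := by
    ext k l
    by_cases h : l = i <;> simp [h]
  have hcoeff (p : R[X]) : p.coeff 1 = (derivative p).eval 0 := by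
    rw [← coeff_zero_eq_eval_zero, coeff_derivative]; simp
  simp only [hcoeff, derivative_det, eval_finsetSum, ← coe_evalRingHom, RingHom.map_det, hcol]
  simp only [← cramer_apply, cramer_eq_adjugate_mulVec]
  simp [trace, mul_apply, mulVec, dotProduct]

theorem Matrix.coeff_trace (M : Matrix m m R[X]) (k : ℕ) :
    (trace M).coeff k = trace ((matPolyEquiv M).coeff k) := by
  simp [trace, finsetSum_coeff, matPolyEquiv_coeff_apply]

end

section

variable {𝕜 : Type*} [NontriviallyNormedField 𝕜]

theorem Polynomial.hasDerivAt_coeff_eval_C (D : 𝕜[X][X]) (r : ℕ) :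
    HasDerivAt (fun s => (D.eval (Polynomial.C s)).coeff r) ((D.coeff 1).coeff r) 0 := by
  set q : 𝕜[X] := ∑ k ∈ D.support, monomial k ((D.coeff k).coeff r)
  have hq : (fun s => (D.eval (Polynomial.C s)).coeff r) = fun s => q.eval s := by
    ext s
    rw [eval_eq_sum, Polynomial.sum_def, finsetSum_coeff, eval_finsetSum]
    simp only [← C_pow, coeff_mul_C, eval_monomial]
  have hq1 : q.coeff 1 = (D.coeff 1).coeff r := by
    by_cases h : 1 ∈ D.support
    · simp [q, coeff_monomial, h]
    · simp_all [q, coeff_monomial]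
  have := q.hasDerivAt 0
  rwa [← coeff_zero_eq_eval_zero, coeff_derivative, zero_add, Nat.cast_zero, zero_add, mul_one,
    hq1, ← hq] at this

theorem deriv_comp_eq_deriv_comp_add_smul {E F : Type*} [NormedAddCommGroup E] [NormedSpace 𝕜 E]
    [NormedAddCommGroup F] [NormedSpace 𝕜 F] {f : E → F} {c : 𝕜 → E} {c' : E} {t : 𝕜}
    (hf : DifferentiableAt 𝕜 f (c t)) (hc : HasDerivAt c c' t) :
    deriv (fun s => f (c s)) t = deriv (fun s : 𝕜 => f (c t + s • c')) 0 := by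
  have hline : HasDerivAt (fun s : 𝕜 => c t + s • c') c' 0 := by
    simpa using ((hasDerivAt_id (0 : 𝕜)).smul_const c').const_add (c t)
  exact (hf.hasFDerivAt.comp_hasDerivAt t hc).deriv.trans
    (hf.hasFDerivAt.comp_hasDerivAt_of_eq 0 hline (by simp)).deriv.symm

theorem differentiable_elemSymm_of [CompleteSpace 𝕜] {m : Type*} [Fintype m] [DecidableEq m]
    (r : ℕ) :
    Differentiable 𝕜 fun x : m × m → 𝕜 => elemSymm r (Matrix.of fun i j => x (i, j)) := by
  set Q := (det (1 + (Polynomial.X : (MvPolynomial (m × m) 𝕜)[X]) •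
    (mvPolynomialX m m 𝕜).map Polynomial.C)).coeff r
  have hQ : (fun x : m × m → 𝕜 => elemSymm r (Matrix.of fun i j => x (i, j))) =
      fun x => MvPolynomial.eval x Q := by
    ext x
    rw [← Polynomial.coeff_map, ← coe_mapRingHom, RingHom.map_det, elemSymm]
    congr 2
    ext i j : 1
    by_cases h : i = j <;> simp [h, mvPolynomialX_apply]
  rw [hQ, ← differentiableOn_univ]
  exact (AnalyticOnNhd.eval_mvPolynomial Q).differentiableOn

end

section

variable {n : ℕ}

theorem gsigma_fin_one (A : Matrix (Fin n) (Fin n) ℝ) (r : ℕ) :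
    gsigma (fun _ : Fin 1 => A) (fun _ => r) = elemSymm r A := by
  have hu : Finsupp.equivFunOnFinite.symm (fun _ : Fin 1 => r) = Finsupp.single default r := by
    ext; simp
  rw [gsigma, hu, ← MvPolynomial.coeff_uniqueAlgEquiv, elemSymm, AlgEquiv.map_det]
  congr 2
  ext i j : 2
  by_cases h : i = j <;> simp [h]

theorem newton_fin_one_zero (A : Matrix (Fin n) (Fin n) ℝ) :
    newton (fun _ : Fin 1 => A) (fun _ => 0) = 1 := by
  simp [newton, newtonAux]

theorem newton_fin_one_succ (A : Matrix (Fin n) (Fin n) ℝ) (k : ℕ) :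
    newton (fun _ : Fin 1 => A) (fun _ => k + 1) =
      elemSymm (k + 1) A • 1 - A * newton (fun _ : Fin 1 => A) (fun _ => k) := by
  have hu : Function.update (fun _ : Fin 1 => k + 1) 0 k = fun _ => k := by
    ext a; simp [Subsingleton.elim a 0]
  simp [newton, newtonAux, hu, gsigma_fin_one]

theorem coeff_matPolyEquiv_adjugate_one_add_X_smul (A : Matrix (Fin n) (Fin n) ℝ) (k : ℕ) :
    (matPolyEquiv (adjugate (1 + (Polynomial.X : ℝ[X]) • A.map Polynomial.C))).coeff k =
      newton (fun _ : Fin 1 => A) (fun _ => k) := by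
  set P := matPolyEquiv (adjugate (1 + (Polynomial.X : ℝ[X]) • A.map Polynomial.C))
  have hP (k : ℕ) :
      ((1 + Polynomial.X * Polynomial.C A) * P).coeff k = elemSymm k A • 1 := by
    rw [← Algebra.algebraMap_eq_smul_one, elemSymm, ← Polynomial.coeff_map,
      ← matPolyEquiv_smul_one, ← mul_adjugate, map_mul, map_add, map_one,
      matPolyEquiv_map_smul, Polynomial.map_X, matPolyEquiv_map_C]
  induction k with
  | zero => simpa [elemSymm_zero, newton_fin_one_zero] using hP 0
  | succ k ih =>
    rw [newton_fin_one_succ, ← hP, ← ih]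
    simp [add_mul, mul_assoc, Polynomial.coeff_X_mul]

theorem hasDerivAt_elemSymm_add_smul (A H : Matrix (Fin n) (Fin n) ℝ) (k : ℕ) :
    HasDerivAt (fun s : ℝ => elemSymm (k + 1) (A + s • H))
      (trace (H * newton (fun _ : Fin 1 => A) (fun _ => k))) 0 := by
  set P : Matrix (Fin n) (Fin n) ℝ[X] := 1 + (Polynomial.X : ℝ[X]) • A.map Polynomial.C
  -- `D = det (1 + t (A + s H))` in `ℝ[t][s]`
  set D : ℝ[X][X] := det (P.map Polynomial.C +
    (Polynomial.X : ℝ[X][X]) • ((Polynomial.X : ℝ[X]) • H.map Polynomial.C).map Polynomial.C)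
  have hD : (fun s : ℝ => elemSymm (k + 1) (A + s • H)) =
      fun s => (D.eval (Polynomial.C s)).coeff (k + 1) := by
    ext s
    rw [elemSymm, ← coe_evalRingHom, RingHom.map_det]
    congr 2
    ext i j : 1
    simp [P]
    ring
  have hD1 : (D.coeff 1).coeff (k + 1) = trace (H * newton (fun _ : Fin 1 => A) (fun _ => k)) := by
    rw [coeff_one_det_add_X_smul, mul_smul_comm, trace_smul, smul_eq_mul, Polynomial.coeff_X_mul,
      coeff_trace, map_mul, matPolyEquiv_map_C, coeff_mul_C,
      coeff_matPolyEquiv_adjugate_one_add_X_smul, trace_mul_comm]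
  rw [hD, ← hD1]
  exact hasDerivAt_coeff_eval_C D (k + 1)

end

theorem deriv_sigma_codim_one {n : ℕ} (B : ℝ → Matrix (Fin n) (Fin n) ℝ)
    (hB : ∀ i j, Differentiable ℝ (fun t => B t i j)) (r : ℕ) (hr : 1 ≤ r) :
    deriv (fun t => gsigma (fun _ : Fin 1 => B t) (fun _ => r)) 0 =
      ((Matrix.of fun i j => deriv (fun t => B t i j) 0) *
        newton (fun _ : Fin 1 => B 0) (fun _ => r - 1)).trace := by
  obtain ⟨k, rfl⟩ : ∃ k, r = k + 1 := ⟨r - 1, by omega⟩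
  set H := Matrix.of fun i j => deriv (fun t => B t i j) 0
  have hc : HasDerivAt (fun t (p : Fin n × Fin n) => B t p.1 p.2) (fun p => H p.1 p.2) 0 :=
    hasDerivAt_pi.2 fun p => (hB p.1 p.2 0).hasDerivAt
  simp only [gsigma_fin_one, Nat.add_sub_cancel]
  exact (deriv_comp_eq_deriv_comp_add_smul (differentiable_elemSymm_of (k + 1) _) hc).trans
    (hasDerivAt_elemSymm_add_smul (B 0) H k).deriv
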